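/- Let (V, R, α ↦ α∨) be a reduced crystallographic root system with coroot lattice Q∨, and let Λ∨ ⊆ V be a subgroup such that Q∨ ⊆ Λ∨ and α(Λ∨) ⊆ ℤ for every root α. If the abelian group Λ∨/Q∨ is torsion-free, then for every root α and every x ∈ V satisfying x − s_α(x) ∈ Λ∨ (equivalently α(x)·α∨ ∈ Λ∨), the real number α(x) is an integer. -/

import Mathlib

/-!
Since `α(x)·α∨ ∈ Λ∨`, the number `2α(x) = α(α(x)·α∨)` is an integer. If it were odd, `α∨/2` would
lie in `Λ∨`; twice it lies in `Q∨`, so torsion-freeness of `Λ∨/Q∨` would put `α∨/2` in `Q∨`.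

That is impossible. Pick `v ∈ ker α` off every other root hyperplane and let `P` consist of `α`
and the roots positive at `v`, so that `P` contains exactly one of `±β` for each root `β`. The
functional `ρ = ∑_{β ∈ P} β` has `ρ(α∨) = 2`, since `s_α` permutes the roots positive at `v`. On the
other hand `ρ(γ∨)` is even for every root `γ`: replacing `β ∈ P` by whichever of `±s_γ β` lies in
`P` is an involution preserving `β(γ∨)` mod 2, whose fixed points have `β(γ∨) ∈ {0, ±2}`. Hence
`ρ(Q∨) ⊆ 2ℤ`, contradicting `ρ(α∨/2) = 1`.
-/

open Module

/-- A reduced crystallographic root system on a real vector space `V`: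
the roots are a finite set of non-zero linear functionals on `V`, each root `α`
has a coroot `α∨ ∈ V` with `α(α∨) = 2`, pairings of roots with coroots are
integers, the reflections `s_α : x ↦ x - α(x)·α∨` (resp. their dual actions
`λ ↦ λ - λ(α∨)·α`) permute the coroots (resp. the roots), and the only roots
proportional to a root `α` are `±α`. -/
structure RedCrystRootSystem (V : Type*) [AddCommGroup V] [Module ℝ V] where
  R : Finset (Module.Dual ℝ V)
  coroot : Module.Dual ℝ V → V
  ne_zero : ∀ α ∈ R, α ≠ 0
  root_coroot_two : ∀ α ∈ R, α (coroot α) = 2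
  crystallographic : ∀ α ∈ R, ∀ β ∈ R, ∃ n : ℤ, β (coroot α) = (n : ℝ)
  refl_root_mem : ∀ α ∈ R, ∀ β ∈ R, β - β (coroot α) • α ∈ R
  refl_coroot_mem : ∀ α ∈ R, ∀ β ∈ R,
    ∃ γ ∈ R, coroot β - α (coroot β) • coroot α = coroot γ
  reduced : ∀ α ∈ R, ∀ β ∈ R, ∀ c : ℝ, β = c • α → β = α ∨ β = -α

namespace RedCrystRootSystem

variable {V : Type*} [AddCommGroup V] [Module ℝ V] (S : RedCrystRootSystem V)

/-- The reflection `s_α : x ↦ x - α(x)·α∨` associated to a root `α`, as a linear map. -/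
def reflMap (α : Module.Dual ℝ V) : V →ₗ[ℝ] V :=
  LinearMap.id - α.smulRight (S.coroot α)

@[simp] lemma reflMap_apply (α : Module.Dual ℝ V) (x : V) :
    S.reflMap α x = x - α x • S.coroot α := rfl

/-- A linear automorphism of `V` is a reflection of the root system if it is
given by `x ↦ x - α(x)·α∨` for some root `α`. -/
def IsReflection (e : V ≃ₗ[ℝ] V) : Prop :=
  ∃ α ∈ S.R, ∀ x : V, e x = x - α x • S.coroot α

/-- The Weyl group: the subgroup of linear automorphisms of `V` generated by the
reflections `s_α`, `α ∈ R`. -/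
def weylGroup : Subgroup (V ≃ₗ[ℝ] V) :=
  Subgroup.closure {e : V ≃ₗ[ℝ] V | S.IsReflection e}

/-- The coroot lattice `Q∨`: the additive subgroup of `V` generated by the coroots. -/
def corootLattice : AddSubgroup V :=
  AddSubgroup.closure (S.coroot '' ↑S.R)

end RedCrystRootSystem

/-- `e` fixes the point `t` of the torus `V ⧸ Λ`. This is expressed by asking for an
additive endomorphism of `V ⧸ Λ` covering `e` (which exists iff `e` preserves `Λ`,
and is then unique) fixing `t`. -/
def FixesInTorus {V : Type*} [AddCommGroup V] [Module ℝ V]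
    (Λ : AddSubgroup V) (e : V ≃ₗ[ℝ] V) (t : V ⧸ Λ) : Prop :=
  ∃ f : (V ⧸ Λ) →+ (V ⧸ Λ),
    (∀ x : V, f (QuotientAddGroup.mk x) = QuotientAddGroup.mk (e x)) ∧ f t = t

theorem AddSubgroup.mem_of_nsmul_mem_of_quotient_torsionFree {A : Type*} [AddCommGroup A]
    {Q Λ : AddSubgroup A}
    (htf : ∀ g : Λ ⧸ Q.addSubgroupOf Λ, g ≠ 0 → ¬IsOfFinAddOrder g)
    {y : A} (hy : y ∈ Λ) {n : ℕ} (hn : n ≠ 0) (hny : n • y ∈ Q) : y ∈ Q := by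
  by_contra hyQ
  refine htf (⟨y, hy⟩ : Λ) ?_ (isOfFinAddOrder_iff_nsmul_eq_zero.mpr ⟨n, Nat.pos_of_ne_zero hn, ?_⟩)
  · rwa [Ne, QuotientAddGroup.eq_zero_iff, AddSubgroup.mem_addSubgroupOf]
  · rw [← QuotientAddGroup.mk_nsmul, QuotientAddGroup.eq_zero_iff,
      AddSubgroup.mem_addSubgroupOf]
    exact hny

namespace RedCrystRootSystem

variable {V : Type*} [AddCommGroup V] [Module ℝ V] (S : RedCrystRootSystem V)

lemma coroot_mem_corootLattice {α : Dual ℝ V} (hα : α ∈ S.R) :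
    S.coroot α ∈ S.corootLattice :=
  AddSubgroup.subset_closure ⟨α, hα, rfl⟩

lemma corootLattice_le_comap {f : Dual ℝ V} {H : AddSubgroup ℝ}
    (hf : ∀ γ ∈ S.R, f (S.coroot γ) ∈ H) : S.corootLattice ≤ H.comap f.toAddMonoidHom :=
  AddSubgroup.closure_le _ |>.mpr <| by
    rintro _ ⟨γ, hγ, rfl⟩
    exact hf γ hγ

variable {S}

lemma reflMap_reflMap {α : Dual ℝ V} (hα : α ∈ S.R) (x : V) :
    S.reflMap α (S.reflMap α x) = x := by
  simp only [reflMap_apply, map_sub, map_smul, S.root_coroot_two α hα]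
  module

lemma reflMap_coroot {α : Dual ℝ V} (hα : α ∈ S.R) :
    S.reflMap α (S.coroot α) = -S.coroot α := by
  rw [reflMap_apply, S.root_coroot_two α hα]
  module

lemma dualMap_reflMap_eq (α β : Dual ℝ V) :
    (S.reflMap α).dualMap β = β - β (S.coroot α) • α := by
  ext x
  simp only [LinearMap.dualMap_apply, reflMap_apply, map_sub, map_smul, LinearMap.sub_apply,
    LinearMap.smul_apply, smul_eq_mul]
  ring

lemma dualMap_reflMap_mem {α β : Dual ℝ V} (hα : α ∈ S.R) (hβ : β ∈ S.R) :
    (S.reflMap α).dualMap β ∈ S.R := by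
  rw [dualMap_reflMap_eq]
  exact S.refl_root_mem α hα β hβ

lemma dualMap_reflMap_dualMap_reflMap {α : Dual ℝ V} (hα : α ∈ S.R) (β : Dual ℝ V) :
    (S.reflMap α).dualMap ((S.reflMap α).dualMap β) = β := by
  ext x
  simp only [LinearMap.dualMap_apply, reflMap_reflMap hα]

lemma dualMap_reflMap_apply_coroot {α : Dual ℝ V} (hα : α ∈ S.R) (β : Dual ℝ V) :
    (S.reflMap α).dualMap β (S.coroot α) = -β (S.coroot α) := by
  rw [LinearMap.dualMap_apply, reflMap_coroot hα, map_neg]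

lemma neg_mem {α : Dual ℝ V} (hα : α ∈ S.R) : -α ∈ S.R := by
  convert dualMap_reflMap_mem hα hα using 1
  rw [dualMap_reflMap_eq, S.root_coroot_two α hα]
  module

lemma eq_or_eq_neg_of_dualMap_reflMap_eq_neg {α β : Dual ℝ V} (hα : α ∈ S.R) (hβ : β ∈ S.R)
    (h : (S.reflMap α).dualMap β = -β) : β = α ∨ β = -α := by
  refine S.reduced α hα β hβ (β (S.coroot α) / 2) ?_
  rw [dualMap_reflMap_eq] at h
  linear_combination (norm := module) (2⁻¹ : ℝ) • h

lemma eq_or_eq_neg_of_ker_le {α β : Dual ℝ V} (hα : α ∈ S.R) (hβ : β ∈ S.R)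
    (h : LinearMap.ker α ≤ LinearMap.ker β) : β = α ∨ β = -α := by
  have hspan : β ∈ Submodule.span ℝ (Set.range fun _ : Unit ↦ α) :=
    mem_span_of_iInf_ker_le_ker (by simpa using h)
  obtain ⟨c, rfl⟩ := Submodule.mem_span_singleton.mp (by simpa using hspan)
  exact S.reduced α hα _ hβ c rfl

lemma exists_apply_eq_zero_and_apply_ne_zero {α : Dual ℝ V} (hα : α ∈ S.R) :
    ∃ v : V, α v = 0 ∧ ∀ β ∈ S.R, β ≠ α → β ≠ -α → β v ≠ 0 := by
  classical
  let T := S.R.filter fun β ↦ β ≠ α ∧ β ≠ -α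
  obtain ⟨v, hv, hne⟩ := Module.Dual.exists_forall_mem_ne_zero_of_forall_exists
    (LinearMap.ker α) (fun β : T ↦ (β : Dual ℝ V)) <| by
      rintro ⟨β, hβT⟩
      obtain ⟨hβ, hβα, hβα'⟩ := Finset.mem_filter.mp hβT
      by_contra! hker
      exact (S.eq_or_eq_neg_of_ker_le hα hβ hker).elim hβα hβα'
  exact ⟨v, hv, fun β hβ hβα hβα' ↦ hne ⟨β, Finset.mem_filter.mpr ⟨hβ, hβα, hβα'⟩⟩⟩

lemma sum_apply_coroot_eq_zero {α : Dual ℝ V} (hα : α ∈ S.R) {F : Finset (Dual ℝ V)}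
    (hF : ∀ β ∈ F, (S.reflMap α).dualMap β ∈ F) : ∑ β ∈ F, β (S.coroot α) = 0 := by
  refine Finset.sum_involution (fun β _ ↦ (S.reflMap α).dualMap β) (fun β _ ↦ ?_)
    (fun β _ hβ hfix ↦ ?_) hF (fun β _ ↦ dualMap_reflMap_dualMap_reflMap hα β)
  · rw [dualMap_reflMap_apply_coroot hα, add_neg_cancel]
  · have := dualMap_reflMap_apply_coroot hα β
    rw [hfix] at this
    exact hβ (by linarith)

variable (S) in
structure IsSignRepresentatives (P : Finset (Dual ℝ V)) : Prop where
  subset : P ⊆ S.R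
  mem_or_neg_mem : ∀ β ∈ S.R, β ∈ P ∨ -β ∈ P
  neg_notMem : ∀ β ∈ P, -β ∉ P

lemma exists_isSignRepresentatives_sum_apply_coroot_eq_two {α : Dual ℝ V} (hα : α ∈ S.R) :
    ∃ P, S.IsSignRepresentatives P ∧ ∑ β ∈ P, β (S.coroot α) = 2 := by
  classical
  obtain ⟨v, hαv, hv⟩ := S.exists_apply_eq_zero_and_apply_ne_zero hα
  let F := S.R.filter fun β ↦ 0 < β v
  have hαF : α ∉ F := by simp [F, hαv]
  refine ⟨insert α F, ⟨?_, fun β hβ ↦ ?_, fun β hβ hβ' ↦ ?_⟩, ?_⟩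
  · exact Finset.insert_subset hα (Finset.filter_subset _ _)
  · by_cases hβα : β = α
    · simp [hβα]
    by_cases hβα' : β = -α
    · simp [hβα']
    rcases (hv β hβ hβα hβα').lt_or_gt with h | h
    · exact Or.inr (Finset.mem_insert_of_mem (by simp [F, S.neg_mem hβ, h]))
    · exact Or.inl (Finset.mem_insert_of_mem (by simp [F, hβ, h]))
  · have hα0 : α ≠ 0 := S.ne_zero α hα
    simp only [F, Finset.mem_insert, Finset.mem_filter, LinearMap.neg_apply] at hβ hβ'
    rcases hβ with rfl | hβ <;> rcases hβ' with h | h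
    · exact hα0 (by linear_combination (norm := module) (-(2⁻¹ : ℝ)) • h)
    · linarith [h.2]
    · rw [← neg_eq_iff_eq_neg.mpr h.symm] at hβ
      simp [hαv] at hβ
    · linarith [h.2, hβ.2]
  · rw [Finset.sum_insert hαF, S.root_coroot_two α hα, add_eq_left]
    refine sum_apply_coroot_eq_zero hα fun β hβ ↦ ?_
    simp only [F, Finset.mem_filter] at hβ ⊢
    refine ⟨dualMap_reflMap_mem hα hβ.1, ?_⟩
    simpa [LinearMap.dualMap_apply, hαv] using hβ.2

lemma apply_coroot_add_self_mem_zmultiples_two {β γ : Dual ℝ V} (hβ : β ∈ S.R) (hγ : γ ∈ S.R) :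
    β (S.coroot γ) + β (S.coroot γ) ∈ AddSubgroup.zmultiples (2 : ℝ) := by
  obtain ⟨n, hn⟩ := S.crystallographic γ hγ β hβ
  exact ⟨n, by simp only [hn, zsmul_eq_mul]; ring⟩

theorem IsSignRepresentatives.sum_apply_coroot_mem_zmultiples_two {P : Finset (Dual ℝ V)}
    (hP : S.IsSignRepresentatives P) {γ : Dual ℝ V} (hγ : γ ∈ S.R) :
    ∑ β ∈ P, β (S.coroot γ) ∈ AddSubgroup.zmultiples (2 : ℝ) := by
  classical
  set s := (S.reflMap γ).dualMap
  let τ : Dual ℝ V → Dual ℝ V := fun β ↦ if s β ∈ P then s β else -s β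
  let f : Dual ℝ V → ℝ ⧸ AddSubgroup.zmultiples (2 : ℝ) := fun β ↦ β (S.coroot γ)
  have hf_add_self (β) (hβ : β ∈ S.R) : f β + f β = 0 := by
    rw [← QuotientAddGroup.mk_add, QuotientAddGroup.eq_zero_iff]
    exact apply_coroot_add_self_mem_zmultiples_two hβ hγ
  have hfτ (β) : f (τ β) = f β ∨ f (τ β) = -f β := by
    simp only [f, τ, s]
    split_ifs <;> simp [dualMap_reflMap_apply_coroot hγ]
  have hτ_mem (β) (hβ : β ∈ S.R) : τ β ∈ P := by
    simp only [τ]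
    split_ifs with h
    · exact h
    · exact (hP.mem_or_neg_mem _ (dualMap_reflMap_mem hγ hβ)).resolve_left h
  rw [← QuotientAddGroup.eq_zero_iff, QuotientAddGroup.mk_sum]
  refine Finset.sum_involution (fun β _ ↦ τ β) (fun β hβ ↦ ?_) (fun β hβ hfβ hfix ↦ ?_)
    (fun β hβ ↦ hτ_mem β (hP.subset hβ)) (fun β hβ ↦ ?_)
  · change f β + f (τ β) = 0
    rcases hfτ β with h | h
    · rw [h, hf_add_self β (hP.subset hβ)]
    · rw [h, add_neg_cancel]
  · simp only [τ] at hfix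
    split_ifs at hfix
    · have := dualMap_reflMap_apply_coroot hγ β
      rw [hfix] at this
      exact hfβ (by simp [show β (S.coroot γ) = 0 by linarith])
    · rcases eq_or_eq_neg_of_dualMap_reflMap_eq_neg hγ (hP.subset hβ)
        (neg_eq_iff_eq_neg.mp hfix) with rfl | rfl
      · exact hfβ (by simp [S.root_coroot_two β hγ])
      · exact hfβ (by simp [S.root_coroot_two γ hγ])
  · simp only [τ]
    split_ifs with h₁ h₂ h₂
    · exact dualMap_reflMap_dualMap_reflMap hγ β
    · exact absurd (by rwa [dualMap_reflMap_dualMap_reflMap hγ]) h₂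
    · simp only [map_neg, s, dualMap_reflMap_dualMap_reflMap hγ] at h₂
      exact absurd h₂ (hP.neg_notMem β hβ)
    · simp [s, dualMap_reflMap_dualMap_reflMap hγ]

theorem two_inv_smul_coroot_notMem_corootLattice {α : Dual ℝ V} (hα : α ∈ S.R) :
    (2⁻¹ : ℝ) • S.coroot α ∉ S.corootLattice := by
  intro hhalf
  obtain ⟨P, hP, hPα⟩ := S.exists_isSignRepresentatives_sum_apply_coroot_eq_two hα
  have hρ : ∀ γ ∈ S.R, (∑ β ∈ P, β) (S.coroot γ) ∈ AddSubgroup.zmultiples (2 : ℝ) := by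
    intro γ hγ
    rw [LinearMap.sum_apply]
    exact hP.sum_apply_coroot_mem_zmultiples_two hγ
  obtain ⟨k, hk⟩ := S.corootLattice_le_comap hρ hhalf
  simp only [LinearMap.toAddMonoidHom_coe, map_smul, LinearMap.sum_apply, hPα, smul_eq_mul,
    zsmul_eq_mul] at hk
  have : (k : ℝ) * 2 = 1 := by linarith
  have : k * 2 = 1 := by exact_mod_cast this
  omega

end RedCrystRootSystem

theorem statement0_general {V : Type*} [AddCommGroup V] [Module ℝ V]
    (S : RedCrystRootSystem V) (Λ : AddSubgroup V)
    (hQΛ : S.corootLattice ≤ Λ)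
    (hint : ∀ α ∈ S.R, ∀ v ∈ Λ, ∃ n : ℤ, α v = (n : ℝ))
    (htf : ∀ g : (↥Λ ⧸ (S.corootLattice.addSubgroupOf Λ)), g ≠ 0 → ¬IsOfFinAddOrder g)
    (α : Module.Dual ℝ V) (hα : α ∈ S.R) (x : V)
    (hx : x - S.reflMap α x ∈ Λ) :
    ∃ n : ℤ, α x = (n : ℝ) := by
  have hcoroot := S.coroot_mem_corootLattice hα
  have hmem : α x • S.coroot α ∈ Λ := by simpa using hx
  obtain ⟨n, hn⟩ := hint α hα _ hmem
  rw [map_smul, S.root_coroot_two α hα, smul_eq_mul] at hn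
  obtain ⟨k, rfl | rfl⟩ := Int.even_or_odd' n
  · exact ⟨k, by push_cast at hn; linarith⟩
  · have hhalf : (2⁻¹ : ℝ) • S.coroot α ∈ Λ := by
      convert sub_mem hmem (zsmul_mem (hQΛ hcoroot) k) using 1
      rw [← Int.cast_smul_eq_zsmul ℝ, ← sub_smul]
      push_cast at hn
      congr 1
      linarith
    refine absurd (AddSubgroup.mem_of_nsmul_mem_of_quotient_torsionFree htf hhalf two_ne_zero ?_)
      (S.two_inv_smul_coroot_notMem_corootLattice hα)
    rwa [← Nat.cast_smul_eq_nsmul ℝ, smul_smul, Nat.cast_two, mul_inv_cancel₀ two_ne_zero,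
      one_smul]

/-- Let `(V, R, α ↦ α∨)` be a reduced crystallographic root system with
coroot lattice `Q∨`, and let `Λ∨ ⊆ V` be a subgroup with `Q∨ ⊆ Λ∨` and `α(Λ∨) ⊆ ℤ` for
every root `α`. If `Λ∨/Q∨` is torsion-free, then for every root `α` and every `x ∈ V`
with `x - s_α(x) ∈ Λ∨`, the real number `α(x)` is an integer. -/
theorem statement0 {V : Type*} [AddCommGroup V] [Module ℝ V] [FiniteDimensional ℝ V]
    (S : RedCrystRootSystem V) (Λ : AddSubgroup V)
    (hQΛ : S.corootLattice ≤ Λ)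
    (hint : ∀ α ∈ S.R, ∀ v ∈ Λ, ∃ n : ℤ, α v = (n : ℝ))
    (htf : ∀ g : (↥Λ ⧸ (S.corootLattice.addSubgroupOf Λ)), g ≠ 0 → ¬IsOfFinAddOrder g)
    (α : Module.Dual ℝ V) (hα : α ∈ S.R) (x : V)
    (hx : x - S.reflMap α x ∈ Λ) :
    ∃ n : ℤ, α x = (n : ℝ) :=
  statement0_general S Λ hQΛ hint htf α hα x hx
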